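/- Assume Hypothesis (⋆). Let p be a prime, (x,y) an arc, and E_x = ⟨O_p(G_{x,z}) : z ∈ Δ(x)⟩. If E_x ⊄ G_x^{[1]}, then for every r-subgroup R of G_x^{[1]} with r a prime different from p, the normaliser N_{G_x}(R) acts transitively on Δ(x). -/

import Mathlib

open Equiv Subgroup

/-- `N` (a subgroup of `Perm V`) acts transitively on the neighbourhood of `x`. -/
def transOn {V : Type*} (Δ : SimpleGraph V) (N : Subgroup (Equiv.Perm V)) (x : V) : Prop :=
  ∀ u ∈ Δ.neighborSet x, ∀ v ∈ Δ.neighborSet x, ∃ g ∈ N, g u = v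

/-- The permutation group induced by `N` on the neighbourhood of `x` is semiregular. -/
def semiregOn {V : Type*} (Δ : SimpleGraph V) (N : Subgroup (Equiv.Perm V)) (x : V) : Prop :=
  ∀ g ∈ N, (∃ u ∈ Δ.neighborSet x, g u = u) → ∀ v ∈ Δ.neighborSet x, g v = v

/-- The stabiliser `G_x`. -/
def vstab {V : Type*} (G : Subgroup (Equiv.Perm V)) (x : V) : Subgroup (Equiv.Perm V) :=
  G ⊓ MulAction.stabilizer (Equiv.Perm V) x

/-- `G_x^{[i]}`: pointwise stabiliser of the ball of radius `i` around `x`. -/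
def ball {V : Type*} (Δ : SimpleGraph V) (G : Subgroup (Equiv.Perm V)) (x : V) (i : ℕ) :
    Subgroup (Equiv.Perm V) :=
  G ⊓ ⨅ z ∈ {z : V | Δ.dist x z ≤ i}, MulAction.stabilizer (Equiv.Perm V) z

/-- `K` is a normal subgroup of `H` (both subgroups of `Perm V`). -/
def normalIn {V : Type*} (K H : Subgroup (Equiv.Perm V)) : Prop :=
  K ≤ H ∧ ∀ h ∈ H, ∀ k ∈ K, h * k * h⁻¹ ∈ K

/-- `O_p(H)`: the largest normal `p`-subgroup of `H`. -/
def Op {V : Type*} (p : ℕ) (H : Subgroup (Equiv.Perm V)) : Subgroup (Equiv.Perm V) :=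
  sSup {K | normalIn K H ∧ IsPGroup p K}

/-- `E_x = ⟨O_p(G_{x,z}) : z ∈ Δ(x)⟩`. -/
def Ep {V : Type*} (Δ : SimpleGraph V) (G : Subgroup (Equiv.Perm V)) (p : ℕ) (x : V) :
    Subgroup (Equiv.Perm V) :=
  ⨆ z ∈ Δ.neighborSet x, Op p (vstab G x ⊓ vstab G z)

/-- `C_{G_x}(G_x^{[1]})`. -/
def locCent {V : Type*} (Δ : SimpleGraph V) (G : Subgroup (Equiv.Perm V)) (x : V) :
    Subgroup (Equiv.Perm V) :=
  vstab G x ⊓ Subgroup.centralizer ((ball Δ G x 1 : Subgroup (Equiv.Perm V)) : Set (Equiv.Perm V))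

/-- Hypothesis (⋆). -/
def StarHyp {V : Type*} (Δ : SimpleGraph V) (G : Subgroup (Equiv.Perm V)) : Prop :=
  ∀ x : V,
    transOn Δ (vstab G x) x ∧
    (transOn Δ (locCent Δ G x) x ∨ semiregOn Δ (locCent Δ G x) x) ∧
    ∀ p : ℕ, p.Prime → (transOn Δ (Ep Δ G p x) x ∨ semiregOn Δ (Ep Δ G p x) x)

/-- `G` is a group of automorphisms of `Δ`. -/
def isAut {V : Type*} (Δ : SimpleGraph V) (G : Subgroup (Equiv.Perm V)) : Prop :=
  ∀ g ∈ G, ∀ u v : V, Δ.Adj (g u) (g v) ↔ Δ.Adj u v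

/-- `K` is a subnormal subgroup of `H`. -/
def subnormalIn {V : Type*} (K H : Subgroup (Equiv.Perm V)) : Prop :=
  ∃ (n : ℕ) (c : ℕ → Subgroup (Equiv.Perm V)),
    c 0 = K ∧ c n = H ∧ ∀ i < n, normalIn (c i) (c (i + 1))

/-- `K` is quasisimple: perfect and simple modulo its centre. -/
def IsQuasisimple {V : Type*} (K : Subgroup (Equiv.Perm V)) : Prop :=
  commutator ↥K = ⊤ ∧ IsSimpleGroup (↥K ⧸ Subgroup.center ↥K)

/-- `E(H)`: the layer, generated by the components of `H`. -/
def layer {V : Type*} (H : Subgroup (Equiv.Perm V)) : Subgroup (Equiv.Perm V) :=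
  sSup {K | subnormalIn K H ∧ IsQuasisimple K}

/-- `F(H)`: the Fitting subgroup of `H`. -/
def fitting {V : Type*} (H : Subgroup (Equiv.Perm V)) : Subgroup (Equiv.Perm V) :=
  sSup {K | normalIn K H ∧ Group.IsNilpotent ↥K}

/-- `F*(H) = E(H)F(H)`: the generalised Fitting subgroup of `H`. -/
def genFitting {V : Type*} (H : Subgroup (Equiv.Perm V)) : Subgroup (Equiv.Perm V) :=
  layer H ⊔ fitting H

/-!
Since `E_x ≰ G_x^{[1]}`, hypothesis (⋆) forces `E_x` to be transitive on `Δ(x)`: were it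
semiregular, each `O_p(G_{x,z})`, which fixes `z`, would fix `Δ(x)` pointwise. It therefore
suffices to show `E_x ≤ N_{G_x}(R) G_x^{[1]}`, as `G_x^{[1]}` acts trivially on `Δ(x)`.
Take `g ∈ O_p(G_{x,z})` and put `P = O_p(G_{x,z}) ∩ G_x^{[1]}`, a `p`-group normalised by `R`.
Then `R` is a Sylow `r`-subgroup of `K = PR`, and `[g, R] ≤ P` puts `R^g` into `K`, so the
Frattini argument gives `k ∈ K ≤ G_x^{[1]}` with `kg ∈ N_{G_x}(R)`.
-/

open Pointwise

namespace Subgroup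

variable {Γ : Type*} [Group Γ]

theorem le_normalizer_of_conj_mem {H K : Subgroup Γ} (h : ∀ a ∈ H, ∀ k ∈ K, a * k * a⁻¹ ∈ K) :
    H ≤ normalizer (K : Set Γ) := fun a ha k =>
  ⟨h a ha k, fun hk => by simpa [mul_assoc] using h a⁻¹ (inv_mem ha) _ hk⟩

theorem eq_of_isPGroup_of_le_sup {p r : ℕ} [Fact p.Prime] [Fact r.Prime] (hpr : p ≠ r)
    {P R Q : Subgroup Γ} (hP : IsPGroup p P) (hQ : IsPGroup r Q) (hRP : R ≤ normalizer (P : Set Γ))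
    (hRQ : R ≤ Q) (hQP : Q ≤ P ⊔ R) : Q = R := by
  refine le_antisymm (fun q hq => ?_) hRQ
  have hqPR : q ∈ (P : Set Γ) * (R : Set Γ) := by
    rw [← coe_mul_of_right_le_normalizer_left P R hRP]
    exact hQP hq
  obtain ⟨u, hu, t, ht, rfl⟩ := hqPR
  have huQ : u ∈ Q := by simpa using mul_mem hq (inv_mem (hRQ ht))
  simpa [disjoint_def.mp (IsPGroup.disjoint_of_ne p r hpr P Q hP hQ) hu huQ] using ht

/-- A Frattini argument: `R` is a Sylow subgroup of `K`, and so is its conjugate by `g`. -/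
theorem exists_mul_mem_normalizer_of_map_conj_le [Finite Γ] {r : ℕ} [Fact r.Prime]
    {K R : Subgroup Γ} (hRK : R ≤ K) (hR : IsPGroup r R)
    (hmax : ∀ Q : Subgroup Γ, IsPGroup r Q → R ≤ Q → Q ≤ K → Q = R) {g : Γ}
    (hg : R.map (MulAut.conj g).toMonoidHom ≤ K) : ∃ k ∈ K, k * g ∈ normalizer (R : Set Γ) := by
  obtain ⟨S, hRS⟩ := (hR.comap_subtype (K := K)).exists_le_sylow
  have hSR : (S : Subgroup K).map K.subtype = R :=
    hmax _ (S.isPGroup'.map _) (fun s hs => ⟨⟨s, hRK hs⟩, hRS hs, rfl⟩) (map_subtype_le _)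
  obtain ⟨T, hgRT⟩ := ((hR.map (MulAut.conj g).toMonoidHom).comap_subtype (K := K)).exists_le_sylow
  obtain ⟨k, rfl⟩ := MulAction.exists_smul_eq K T S
  refine ⟨k, k.2, mem_normalizer_iff_map_conj_eq.mpr ?_⟩
  refine eq_of_le_of_card_ge ?_ (card_map_of_injective (MulAut.conj _).injective).ge
  rintro _ ⟨s, hs, rfl⟩
  have hgs : (⟨g * s * g⁻¹, hg ⟨s, hs, rfl⟩⟩ : K) ∈ T := hgRT ⟨s, hs, rfl⟩
  have hkgs : MulAut.conj k • (⟨g * s * g⁻¹, hg ⟨s, hs, rfl⟩⟩ : K) ∈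
      ((k • T : Sylow r K) : Subgroup K) := by
    rw [Sylow.coe_subgroup_smul]
    exact smul_mem_pointwise_smul _ _ _ hgs
  rw [← hSR]
  exact ⟨_, hkgs, by simp [mul_assoc]⟩

theorem exists_mem_sup_mul_mem_normalizer [Finite Γ] {p r : ℕ} [Fact p.Prime] [Fact r.Prime]
    (hpr : p ≠ r) {P R : Subgroup Γ} (hP : IsPGroup p P) (hR : IsPGroup r R)
    (hRP : R ≤ normalizer (P : Set Γ)) {g : Γ} (hg : ∀ s ∈ R, g * s * g⁻¹ * s⁻¹ ∈ P) :
    ∃ k ∈ P ⊔ R, k * g ∈ normalizer (R : Set Γ) := by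
  refine exists_mul_mem_normalizer_of_map_conj_le le_sup_right hR
    (fun Q hQ hRQ hQK => eq_of_isPGroup_of_le_sup hpr hP hQ hRP hRQ hQK) ?_
  rintro _ ⟨s, hs, rfl⟩
  have hgs : g * s * g⁻¹ = (g * s * g⁻¹ * s⁻¹) * s := by group
  rw [MulEquiv.coe_toMonoidHom, MulAut.conj_apply, hgs]
  exact mul_mem_sup (hg s hs) hs

end Subgroup

theorem SimpleGraph.Connected.dist_le_one_iff {V : Type*} {Δ : SimpleGraph V} (hconn : Δ.Connected)
    {u v : V} : Δ.dist u v ≤ 1 ↔ Δ.Adj u v ∨ u = v := by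
  rw [← SimpleGraph.edist_le_one_iff_adj_or_eq, ← (hconn u v).coe_dist_eq_edist]
  exact_mod_cast Iff.rfl

section Op

variable {V : Type*} {p : ℕ} {H : Subgroup (Perm V)}

theorem le_normalizer_of_normalIn {K : Subgroup (Perm V)} (h : normalIn K H) :
    H ≤ normalizer (K : Set (Perm V)) :=
  le_normalizer_of_conj_mem h.2

theorem Op_le : Op p H ≤ H :=
  sSup_le fun _ hK => hK.1.1

theorem le_normalizer_Op : H ≤ normalizer (Op p H : Set (Perm V)) := by
  rw [Op, sSup_eq_iSup']
  exact (le_iInf fun K => le_normalizer_of_normalIn K.2.1).trans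
    (iInf_normalizer_le_normalizer_iSup _)

/-- `O_p(H)` lies in every Sylow `p`-subgroup of `H`. -/
theorem isPGroup_Op [Finite V] : IsPGroup p (Op p H) := by
  obtain ⟨S⟩ : Nonempty (Sylow p H) := inferInstance
  refine (S.isPGroup'.map H.subtype).to_le (sSup_le fun K hK => ?_)
  have : (K.subgroupOf H).Normal :=
    (normal_subgroupOf_iff_le_normalizer hK.1.1).mpr (le_normalizer_of_normalIn hK.1)
  have hKS : K.subgroupOf H ≤ S := @IsPGroup.le_sylow_of_normal p H _ _ this hK.2.comap_subtype S
  simpa [subgroupOf_map_subtype, hK.1.1] using map_mono (f := H.subtype) hKS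

end Op

section Stabilisers

variable {V : Type*} {Δ : SimpleGraph V} {G : Subgroup (Perm V)} {x : V}

theorem mem_vstab {g : Perm V} : g ∈ vstab G x ↔ g ∈ G ∧ g x = x := by
  simp [vstab, MulAction.mem_stabilizer_iff]

theorem mem_ball_one (hconn : Δ.Connected) {g : Perm V} :
    g ∈ ball Δ G x 1 ↔ g ∈ vstab G x ∧ ∀ w, Δ.Adj x w → g w = w := by
  simp only [ball, vstab, mem_inf, mem_iInf, MulAction.mem_stabilizer_iff, Perm.smul_def,
    Set.mem_ofPred_eq, hconn.dist_le_one_iff]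
  constructor
  · rintro ⟨hg, h⟩
    exact ⟨⟨hg, h x (Or.inr rfl)⟩, fun w hw => h w (Or.inl hw)⟩
  · rintro ⟨⟨hg, hx⟩, hnb⟩
    exact ⟨hg, fun z => Or.rec (hnb z) (fun h => h ▸ hx)⟩

theorem ball_one_le_vstab (hconn : Δ.Connected) : ball Δ G x 1 ≤ vstab G x :=
  fun _ hg => ((mem_ball_one hconn).mp hg).1

theorem vstab_le_normalizer_ball_one (hconn : Δ.Connected) (hG : isAut Δ G) :
    vstab G x ≤ normalizer (ball Δ G x 1 : Set (Perm V)) := by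
  refine le_normalizer_of_conj_mem fun h hh b hb => ?_
  obtain ⟨hbx, hbnb⟩ := (mem_ball_one hconn).mp hb
  refine (mem_ball_one hconn).mpr ⟨mul_mem (mul_mem hh hbx) (inv_mem hh), fun w hw => ?_⟩
  have hhx : h⁻¹ x = x := Perm.inv_eq_iff_eq.mpr (mem_vstab.mp hh).2.symm
  have hw' : Δ.Adj x (h⁻¹ w) := by
    simpa [hhx] using (hG h⁻¹ (inv_mem (mem_vstab.mp hh).1) x w).mpr hw
  simp only [Perm.mul_apply, hbnb _ hw']
  exact h.apply_symm_apply w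

theorem Ep_le_ball_one_of_semiregOn (hconn : Δ.Connected) {p : ℕ}
    (h : semiregOn Δ (Ep Δ G p x) x) : Ep Δ G p x ≤ ball Δ G x 1 := by
  refine iSup₂_le fun z hz q hq => ?_
  have hqE : q ∈ Ep Δ G p x := le_iSup₂ (f := fun z _ => Op p (vstab G x ⊓ vstab G z)) z hz hq
  obtain ⟨hqx, hqz⟩ := mem_inf.mp (Op_le hq)
  exact (mem_ball_one hconn).mpr ⟨hqx, h q hqE ⟨z, hz, (mem_vstab.mp hqz).2⟩⟩

/-- Elements of `N ⊔ B` act on `Δ(x)` as elements of `N`, since `N ⊔ B = N * B`. -/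
theorem transOn_of_le_sup {H N B : Subgroup (Perm V)} (hH : transOn Δ H x) (hHNB : H ≤ N ⊔ B)
    (hNB : N ≤ normalizer (B : Set (Perm V))) (hB : ∀ b ∈ B, ∀ w, Δ.Adj x w → b w = w) :
    transOn Δ N x := by
  intro u hu v hv
  obtain ⟨e, he, rfl⟩ := hH u hu v hv
  have heNB : e ∈ (N : Set (Perm V)) * (B : Set (Perm V)) := by
    rw [← coe_mul_of_left_le_normalizer_right N B hNB]
    exact hHNB he
  obtain ⟨n, hn, b, hb, rfl⟩ := heNB
  exact ⟨n, hn, by simp [hB b hb u hu]⟩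

theorem Op_le_normalizer_sup_ball_one [Finite V] (hconn : Δ.Connected) (hG : isAut Δ G)
    {p r : ℕ} [Fact p.Prime] [Fact r.Prime] (hpr : p ≠ r) {z : V} (hz : Δ.Adj x z)
    {R : Subgroup (Perm V)} (hRB : R ≤ ball Δ G x 1) (hR : IsPGroup r R) :
    Op p (vstab G x ⊓ vstab G z) ≤
      (vstab G x ⊓ normalizer (R : Set (Perm V))) ⊔ ball Δ G x 1 := by
  set A := vstab G x ⊓ vstab G z
  set B := ball Δ G x 1
  have hBA : B ≤ A := fun b hb => by
    obtain ⟨hbx, hbnb⟩ := (mem_ball_one hconn).mp hb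
    exact ⟨hbx, mem_vstab.mpr ⟨(mem_vstab.mp hbx).1, hbnb z hz⟩⟩
  have hRP : R ≤ normalizer ((Op p A ⊓ B : Subgroup (Perm V)) : Set (Perm V)) :=
    (le_inf (hRB.trans (hBA.trans le_normalizer_Op))
      (hRB.trans ((ball_one_le_vstab hconn).trans (vstab_le_normalizer_ball_one hconn hG)))).trans
      inf_normalizer_le_normalizer_inf
  intro g hg
  have hgx : g ∈ vstab G x := (mem_inf.mp (Op_le hg)).1
  have hcomm : ∀ s ∈ R, g * s * g⁻¹ * s⁻¹ ∈ Op p A ⊓ B := by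
    intro s hs
    have hsg : s * g⁻¹ * s⁻¹ ∈ Op p A :=
      (le_normalizer_Op (hBA (hRB hs)) g⁻¹).mp (inv_mem hg)
    have hgs : g * s * g⁻¹ ∈ B := (vstab_le_normalizer_ball_one hconn hG hgx s).mp (hRB hs)
    refine mem_inf.mpr ⟨?_, mul_mem hgs (inv_mem (hRB hs))⟩
    simpa [mul_assoc] using mul_mem hg hsg
  obtain ⟨k, hk, hkg⟩ :=
    exists_mem_sup_mul_mem_normalizer hpr isPGroup_Op.to_inf_left hR hRP hcomm
  have hkB : k ∈ B := sup_le inf_le_right hRB hk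
  rw [← inv_mul_cancel_left k g, sup_comm]
  exact mul_mem_sup (inv_mem hkB) ⟨mul_mem (ball_one_le_vstab hconn hkB) hgx, hkg⟩

end Stabilisers

theorem stmt6_general {V : Type*} [Fintype V] (Δ : SimpleGraph V) (G : Subgroup (Equiv.Perm V))
    (hconn : Δ.Connected) (hG : isAut Δ G) (hstar : StarHyp Δ G)
    (p : ℕ) (hp : p.Prime) {x : V}
    (hEx : ¬ Ep Δ G p x ≤ ball Δ G x 1) :
    ∀ (r : ℕ), r.Prime → r ≠ p → ∀ R : Subgroup (Equiv.Perm V),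
      R ≤ ball Δ G x 1 → IsPGroup r R →
      transOn Δ (vstab G x ⊓ Subgroup.normalizer (R : Set (Equiv.Perm V))) x := by
  intro r hr hrp R hRB hR
  have := Fact.mk hp
  have := Fact.mk hr
  have hEtrans : transOn Δ (Ep Δ G p x) x :=
    ((hstar x).2.2 p hp).resolve_right fun h => hEx (Ep_le_ball_one_of_semiregOn hconn h)
  refine transOn_of_le_sup hEtrans ?_ (inf_le_left.trans (vstab_le_normalizer_ball_one hconn hG))
    fun b hb => ((mem_ball_one hconn).mp hb).2
  exact iSup₂_le fun z hz => Op_le_normalizer_sup_ball_one hconn hG hrp.symm hz hRB hR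

theorem stmt6 {V : Type*} [Fintype V] (Δ : SimpleGraph V) (G : Subgroup (Equiv.Perm V))
    (hconn : Δ.Connected) (hG : isAut Δ G) (hstar : StarHyp Δ G)
    (p : ℕ) (hp : p.Prime) {x y : V} (hxy : Δ.Adj x y)
    (hEx : ¬ Ep Δ G p x ≤ ball Δ G x 1) :
    ∀ (r : ℕ), r.Prime → r ≠ p → ∀ R : Subgroup (Equiv.Perm V),
      R ≤ ball Δ G x 1 → IsPGroup r R →
      transOn Δ (vstab G x ⊓ Subgroup.normalizer (R : Set (Equiv.Perm V))) x :=
  stmt6_general Δ G hconn hG hstar p hp hEx
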